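/- arXiv:2403.04003 — 2 statements merged into one kernel-verified Lean document; each statement's English description precedes it below -/
import Mathlib

section
/- Let N ≥ 1 and let 1 ≤ j ≤ m. Let B : ℝ → Matrix(N×N, ℝ) be a C^m family of symmetric matrices, and let u ∈ ℝ^N satisfy B(0)u = 0 and ⟨u, B^{(i)}(0) u⟩ = 0 for every i = 1, …, j−1, where B^{(i)} denotes the i-th entrywise derivative of B in t. Let P : ℝ → Matrix(N×N, ℝ) be a continuously differentiable family of matrices such that each P_t is an orthogonal projection (P_tᵀ = P_t and P_t² = P_t) and P₀ u = u. Then lim_{t→0, t≠0} j!·⟨P_{t^j} u, t^{−j} B(t) P_{t^j} u⟩ = ⟨u, B^{(j)}(0) u⟩. -/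
/-!
Write `P_{t^j} u = u + w_t`. Since `B t` is symmetric,
`⟨u + w, B (u + w)⟩ = ⟨u, B u⟩ + 2 ⟨B u, w⟩ + ⟨w, B w⟩`.
All derivatives of order `< j` of `t ↦ ⟨u, B t u⟩` vanish at `0`, so by Taylor's theorem
the first term is `t^j/j! ⟨u, B^{(j)}(0) u⟩ + o(t^j)`. As `P` is `C¹` with `P₀ u = u`,
`w_t = O(t^j)`, and as `B 0 u = 0`, `B t u = O(t)`; so the other two terms are
`O(t^{j+1})` and `O(t^{2j})`.
-/

open Matrix

/-- The `i`-th entrywise derivative of a family of matrices. -/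
noncomputable def entryDeriv (N : ℕ) (B : ℝ → Matrix (Fin N) (Fin N) ℝ) (i : ℕ) (t : ℝ) :
    Matrix (Fin N) (Fin N) ℝ :=
  Matrix.of fun a b => iteratedDeriv i (fun s => B s a b) t

open Filter Topology

theorem tendsto_pow_nhdsNE_zero {M₀ : Type*} [MonoidWithZero M₀] [NoZeroDivisors M₀]
    [TopologicalSpace M₀] [ContinuousMul M₀] {n : ℕ} (hn : n ≠ 0) :
    Tendsto (fun x : M₀ => x ^ n) (𝓝[≠] 0) (𝓝[≠] 0) := by
  refine tendsto_nhdsWithin_iff.mpr ⟨?_, ?_⟩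
  · exact tendsto_nhdsWithin_of_tendsto_nhds ((continuous_pow n).tendsto' 0 0 (zero_pow hn))
  · filter_upwards [self_mem_nhdsWithin] with x hx using pow_ne_zero n hx

theorem tendsto_inv_pow_smul_of_iteratedDeriv_eq_zero {E : Type*} [NormedAddCommGroup E]
    [NormedSpace ℝ E] {f : ℝ → E} {n : ℕ} {x₀ : ℝ} (hf : ContDiff ℝ n f)
    (hvanish : ∀ i < n, iteratedDeriv i f x₀ = 0) :
    Tendsto (fun x => ((x - x₀) ^ n)⁻¹ • f x) (𝓝[≠] x₀)
      (𝓝 ((n.factorial : ℝ)⁻¹ • iteratedDeriv n f x₀)) := by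
  have htaylor : ∀ x, taylorWithinEval f n Set.univ x₀ x
      = ((n.factorial : ℝ)⁻¹ * (x - x₀) ^ n) • iteratedDeriv n f x₀ := by
    intro x
    rw [taylor_within_apply, Finset.sum_range_succ, iteratedDerivWithin_univ,
      Finset.sum_eq_zero fun i hi => ?_, zero_add]
    rw [iteratedDerivWithin_univ, hvanish i (Finset.mem_range.mp hi), smul_zero]
  have h := (taylor_tendsto convex_univ (Set.mem_univ x₀) hf.contDiffOn).mono_left
    (nhdsWithin_mono x₀ (Set.subset_univ {x₀}ᶜ))
  refine tendsto_sub_nhds_zero_iff.mp (h.congr' ?_)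
  filter_upwards [self_mem_nhdsWithin] with x hx
  have hpow : (x - x₀) ^ n ≠ 0 := pow_ne_zero n (sub_ne_zero.mpr hx)
  rw [htaylor, smul_sub, smul_smul, mul_comm _ ((x - x₀) ^ n), ← mul_assoc,
    inv_mul_cancel₀ hpow, one_mul]

theorem dotProduct_mulVec_eq_sum {n R : Type*} [Fintype n] [CommSemiring R] (M : Matrix n n R)
    (u v : n → R) : u ⬝ᵥ (M *ᵥ v) = ∑ a, ∑ b, u a * v b * M a b := by
  simp only [dotProduct, mulVec, Finset.mul_sum]
  exact Finset.sum_congr rfl fun a _ => Finset.sum_congr rfl fun b _ => by ring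

section
variable {N : ℕ} {B : ℝ → Matrix (Fin N) (Fin N) ℝ}

theorem contDiff_dotProduct_mulVec {n : ℕ} (hB : ∀ a b, ContDiff ℝ n fun t => B t a b)
    (u v : Fin N → ℝ) : ContDiff ℝ n fun t => u ⬝ᵥ (B t *ᵥ v) := by
  simp only [dotProduct_mulVec_eq_sum]
  exact ContDiff.sum fun a _ => ContDiff.sum fun b _ => contDiff_const.mul (hB a b)

theorem iteratedDeriv_dotProduct_mulVec {n : ℕ} (hB : ∀ a b, ContDiff ℝ n fun t => B t a b)
    (u v : Fin N → ℝ) (x : ℝ) :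
    iteratedDeriv n (fun t => u ⬝ᵥ (B t *ᵥ v)) x = u ⬝ᵥ (entryDeriv N B n x *ᵥ v) := by
  simp only [dotProduct_mulVec_eq_sum]
  rw [iteratedDeriv_fun_sum fun a _ => (ContDiff.sum fun b _ =>
    contDiff_const.mul (hB a b)).contDiffAt]
  refine Finset.sum_congr rfl fun a _ => ?_
  rw [iteratedDeriv_fun_sum fun b _ => (contDiff_const.mul (hB a b)).contDiffAt]
  exact Finset.sum_congr rfl fun b _ => iteratedDeriv_const_mul _ (hB a b).contDiffAt

theorem tendsto_inv_pow_smul_dotProduct_mulVec {n : ℕ}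
    (hB : ∀ a b, ContDiff ℝ n fun t => B t a b) {u : Fin N → ℝ}
    (hvanish : ∀ i < n, u ⬝ᵥ (entryDeriv N B i 0 *ᵥ u) = 0) :
    Tendsto (fun t => (t ^ n)⁻¹ • (u ⬝ᵥ (B t *ᵥ u))) (𝓝[≠] 0)
      (𝓝 ((n.factorial : ℝ)⁻¹ • (u ⬝ᵥ (entryDeriv N B n 0 *ᵥ u)))) := by
  have h := tendsto_inv_pow_smul_of_iteratedDeriv_eq_zero (contDiff_dotProduct_mulVec hB u u)
    fun i hi => by
      rw [iteratedDeriv_dotProduct_mulVec fun a b => (hB a b).of_le (by exact_mod_cast hi.le)]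
      exact hvanish i hi
  simpa only [sub_zero, iteratedDeriv_dotProduct_mulVec hB] using h

theorem hasDerivAt_mulVec {x : ℝ} (hB : ∀ a b, DifferentiableAt ℝ (fun t => B t a b) x)
    (u : Fin N → ℝ) : HasDerivAt (fun t => B t *ᵥ u) (entryDeriv N B 1 x *ᵥ u) x := by
  refine hasDerivAt_pi.mpr fun a => ?_
  simp only [mulVec, dotProduct, entryDeriv, of_apply, iteratedDeriv_one]
  exact HasDerivAt.fun_sum fun b _ => (hB a b).hasDerivAt.mul_const (u b)

theorem tendsto_inv_smul_mulVec_sub {x : ℝ}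
    (hB : ∀ a b, DifferentiableAt ℝ (fun t => B t a b) x) (u : Fin N → ℝ) :
    Tendsto (fun t => (t - x)⁻¹ • (B t *ᵥ u - B x *ᵥ u)) (𝓝[≠] x)
      (𝓝 (entryDeriv N B 1 x *ᵥ u)) :=
  (hasDerivAt_iff_tendsto_slope.mp (hasDerivAt_mulVec hB u)).congr fun _ =>
    slope_def_module _ _ _

end

theorem Filter.Tendsto.dotProduct {α n R : Type*} [Fintype n] [Mul R] [AddCommMonoid R]
    [TopologicalSpace R] [ContinuousAdd R] [ContinuousMul R] {l : Filter α} {f g : α → n → R}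
    {a b : n → R} (hf : Tendsto f l (𝓝 a)) (hg : Tendsto g l (𝓝 b)) :
    Tendsto (fun x => f x ⬝ᵥ g x) l (𝓝 (a ⬝ᵥ b)) :=
  ((continuous_fst.dotProduct continuous_snd).tendsto (a, b)).comp (hf.prodMk_nhds hg)

theorem Filter.Tendsto.matrix_mulVec {α m n R : Type*} [Fintype n]
    [NonUnitalNonAssocSemiring R] [TopologicalSpace R] [ContinuousAdd R] [ContinuousMul R]
    {l : Filter α} {A : α → Matrix m n R} {f : α → n → R} {M : Matrix m n R} {v : n → R}
    (hA : Tendsto A l (𝓝 M)) (hf : Tendsto f l (𝓝 v)) :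
    Tendsto (fun x => A x *ᵥ f x) l (𝓝 (M *ᵥ v)) :=
  ((continuous_fst.matrix_mulVec continuous_snd).tendsto (M, v)).comp (hA.prodMk_nhds hf)

theorem Matrix.IsSymm.add_dotProduct_mulVec_add {n R : Type*} [Fintype n] [CommSemiring R]
    {M : Matrix n n R} (hM : M.IsSymm) (u w : n → R) :
    (u + w) ⬝ᵥ (M *ᵥ (u + w)) = u ⬝ᵥ (M *ᵥ u) + 2 * ((M *ᵥ u) ⬝ᵥ w) + w ⬝ᵥ (M *ᵥ w) := by
  have hcross : u ⬝ᵥ (M *ᵥ w) = (M *ᵥ u) ⬝ᵥ w := by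
    rw [dotProduct_mulVec, ← mulVec_transpose, hM.eq, dotProduct_comm]
  rw [mulVec_add, add_dotProduct, dotProduct_add, dotProduct_add, hcross, dotProduct_comm w (M *ᵥ u)]
  ring

theorem stmt_3_general (N m j : ℕ) (hj : 1 ≤ j) (hjm : j ≤ m)
    (B : ℝ → Matrix (Fin N) (Fin N) ℝ)
    (hB : ∀ a b, ContDiff ℝ (m : ℕ∞) fun t => B t a b)
    (hsymm : ∀ t, (B t).IsSymm)
    (u : Fin N → ℝ)
    (hu0 : (B 0) *ᵥ u = 0)
    (hui : ∀ i, 1 ≤ i → i < j → u ⬝ᵥ ((entryDeriv N B i 0) *ᵥ u) = 0)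
    (P : ℝ → Matrix (Fin N) (Fin N) ℝ)
    (hP : ∀ a b, ContDiff ℝ 1 fun t => P t a b)
    (hPu : (P 0) *ᵥ u = u) :
    Filter.Tendsto
      (fun t : ℝ => (j.factorial : ℝ) *
        (((P (t ^ j)) *ᵥ u) ⬝ᵥ ((t ^ j)⁻¹ • ((B t) *ᵥ ((P (t ^ j)) *ᵥ u)))))
      (nhdsWithin 0 {0}ᶜ)
      (nhds (u ⬝ᵥ ((entryDeriv N B j 0) *ᵥ u))) := by
  have hBj : ∀ a b, ContDiff ℝ j fun t => B t a b :=
    fun a b => (hB a b).of_le (by exact_mod_cast hjm)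
  have hBdiff : ∀ a b, Differentiable ℝ fun t => B t a b :=
    fun a b => (hBj a b).differentiable (by simp; omega)
  have hquad := tendsto_inv_pow_smul_dotProduct_mulVec hBj fun i hi => by
    rcases Nat.eq_zero_or_pos i with rfl | hi0
    · have hB0 : entryDeriv N B 0 0 = B 0 := by ext a b; simp [entryDeriv]
      rw [hB0, hu0, dotProduct_zero]
    · exact hui i hi0 hi
  have hpow := tendsto_pow_nhdsNE_zero (M₀ := ℝ) (by omega : j ≠ 0)
  have hPslope := (tendsto_inv_smul_mulVec_sub
    (fun a b => (hP a b).differentiable one_ne_zero 0) u).comp hpow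
  have hBslope := tendsto_inv_smul_mulVec_sub (fun a b => hBdiff a b 0) u
  have hBcont : Tendsto B (𝓝[≠] 0) (𝓝 (B 0)) := tendsto_nhdsWithin_of_tendsto_nhds
    ((continuous_matrix fun a b => (hBdiff a b).continuous).tendsto 0)
  have hid : Tendsto (fun t : ℝ => t) (𝓝[≠] 0) (𝓝 0) :=
    tendsto_nhdsWithin_of_tendsto_nhds tendsto_id
  have hlim := ((hquad.add ((hid.const_mul 2).mul (hBslope.dotProduct hPslope))).add
    ((hpow.mono_right nhdsWithin_le_nhds).mul
      (hPslope.dotProduct (hBcont.matrix_mulVec hPslope)))).const_mul (j.factorial : ℝ)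
  refine (hlim.congr' ?_).trans (le_of_eq (congrArg 𝓝 ?_))
  · filter_upwards [self_mem_nhdsWithin] with t (ht : t ≠ 0)
    simp only [Function.comp_apply, hPu, hu0, sub_zero, smul_dotProduct, dotProduct_smul,
      mulVec_smul, smul_eq_mul]
    set w := P (t ^ j) *ᵥ u - u
    have hsplit : P (t ^ j) *ᵥ u = u + w := (add_sub_cancel u _).symm
    rw [hsplit, (hsymm t).add_dotProduct_mulVec_add]
    field_simp
  · simp [Nat.factorial_ne_zero]

/-- The key limit: if `B` is a `C^m` family of symmetric matrices, `u ∈ ker B(0)`,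
`⟨u, B^{(i)}(0) u⟩ = 0` for `i = 1, …, j-1`, and `P_t` is a C¹ family of orthogonal
projections with `P₀ u = u`, then
`j! ⟨P_{t^j} u, t^{-j} B(t) P_{t^j} u⟩ → ⟨u, B^{(j)}(0) u⟩` as `t → 0`, `t ≠ 0`. -/
theorem stmt_3 (N m j : ℕ) (hN : 1 ≤ N) (hj : 1 ≤ j) (hjm : j ≤ m)
    (B : ℝ → Matrix (Fin N) (Fin N) ℝ)
    (hB : ∀ a b, ContDiff ℝ (m : ℕ∞) fun t => B t a b)
    (hsymm : ∀ t, (B t).IsSymm)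
    (u : Fin N → ℝ)
    (hu0 : (B 0) *ᵥ u = 0)
    (hui : ∀ i, 1 ≤ i → i < j → u ⬝ᵥ ((entryDeriv N B i 0) *ᵥ u) = 0)
    (P : ℝ → Matrix (Fin N) (Fin N) ℝ)
    (hP : ∀ a b, ContDiff ℝ 1 fun t => P t a b)
    (hproj : ∀ t, (P t)ᵀ = P t ∧ P t * P t = P t)
    (hPu : (P 0) *ᵥ u = u) :
    Filter.Tendsto
      (fun t : ℝ => (j.factorial : ℝ) *
        (((P (t ^ j)) *ᵥ u) ⬝ᵥ ((t ^ j)⁻¹ • ((B t) *ᵥ ((P (t ^ j)) *ᵥ u)))))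
      (nhdsWithin 0 {0}ᶜ)
      (nhds (u ⬝ᵥ ((entryDeriv N B j 0) *ᵥ u))) :=
  stmt_3_general N m j hj hjm B hB hsymm u hu0 hui P hP hPu
end

section
/- Let a, λ ∈ ℝ with a < 0 and λ ≥ 0, and let B_∞ be the 4×4 real matrix [[0,0,0,1],[0,0,1,−2],[−λ−1+a,0,0,0],[0,1,0,0]]. Then B_∞ is hyperbolic: every eigenvalue z ∈ ℂ of B_∞ (regarded as a matrix over ℂ) has nonzero real part. -/
/-!
The characteristic polynomial of `B_∞` is the biquadratic `z⁴ + 2z² + (λ + 1 - a)`. On the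
imaginary axis `z = iy` it becomes `y⁴ - 2y² + (λ + 1 - a) = (y² - 1)² + (λ - a)`, which is
positive because `λ - a > 0`.
-/

open Matrix

/-- The asymptotic coefficient matrix `B_∞(λ)` of the linearized Swift–Hohenberg equation
(with `a = f'(0)`). -/
def Binf (a lam : ℝ) : Matrix (Fin 4) (Fin 4) ℝ :=
  !![0, 0, 0, 1;
     0, 0, 1, -2;
     -lam - 1 + a, 0, 0, 0;
     0, 1, 0, 0]

open Polynomial

theorem Binf_charpoly (a lam : ℝ) :
    (Binf a lam).charpoly = X ^ 4 + 2 * X ^ 2 + C (lam + 1 - a) := by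
  rw [Matrix.charpoly, det_succ_row_zero]
  simp [Fin.sum_univ_succ, det_fin_three, Binf, charmatrix_apply, Fin.succAbove]
  rw [← C_ofNat]
  ring

theorem re_ne_zero_of_biquadratic_eq_zero {b c : ℝ} (hbc : b ^ 2 < 4 * c) {z : ℂ}
    (hz : z ^ 4 + b * z ^ 2 + c = 0) : z.re ≠ 0 := by
  intro hre
  obtain ⟨y, rfl⟩ : ∃ y : ℝ, z = y * Complex.I := ⟨z.im, Complex.ext (by simp [hre]) (by simp)⟩
  have hsq : ((y : ℂ) * Complex.I) ^ 2 = ((-y ^ 2 : ℝ) : ℂ) := by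
    push_cast
    rw [mul_pow, Complex.I_sq]
    ring
  have hy : (-y ^ 2) ^ 2 + b * (-y ^ 2) + c = 0 := by
    rw [show 4 = 2 * 2 from rfl, pow_mul, hsq] at hz
    exact_mod_cast hz
  nlinarith [sq_nonneg (2 * y ^ 2 - b)]

/-- If `a < 0` and `λ ≥ 0`, then `B_∞(λ)` is hyperbolic: every complex eigenvalue has
nonzero real part. -/
theorem stmt_6 (a lam : ℝ) (ha : a < 0) (hlam : 0 ≤ lam) :
    ∀ z ∈ spectrum ℂ ((Binf a lam).map Complex.ofReal), z.re ≠ 0 := by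
  intro z hz
  rw [mem_spectrum_iff_isRoot_charpoly] at hz
  change ((Binf a lam).map Complex.ofRealHom).charpoly.IsRoot z at hz
  rw [charpoly_map, Binf_charpoly] at hz
  apply re_ne_zero_of_biquadratic_eq_zero (b := 2) (c := lam + 1 - a) (by linarith)
  simpa using hz
end
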